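/- arXiv:math/0305347 — 8 statements merged into one kernel-verified Lean document; each statement's English description precedes it below -/
import Mathlib

section
/- Let A be a nonempty finite subset of a finite-dimensional real inner product space E and let β be the unique point of the convex hull of A closest to the origin. Then ⟨α, β⟩ ≥ ‖β‖² for every α ∈ A; moreover β lies in the convex hull of the subset A_β = {α ∈ A : ⟨α, β⟩ = ‖β‖²}, and β is also the unique point of the convex hull of A_β closest to the origin. -/
open scoped RealInnerProductSpace

/-!
The minimiser `β` of the norm on a convex set `K` satisfies the variational inequality
`⟪y - β, β⟫ ≥ 0` for `y ∈ K`, i.e. `K` lies in the half-space `⟪·, β⟫ ≥ ‖β‖²`, whose boundary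
contains `β`. A convex combination of points of a half-space lying on its boundary only puts
weight on boundary points, so `β` is in the hull of `A_β`. Uniqueness follows from the
variational inequality applied to two minimisers: `‖β - γ‖² = ‖β‖² + ‖γ‖² - 2⟪β, γ⟫ ≤ 0`.
-/

theorem mem_convexHull_setOf_eq_of_le {𝕜 E : Type*} [Field 𝕜] [LinearOrder 𝕜]
    [IsStrictOrderedRing 𝕜] [AddCommGroup E] [Module 𝕜 E] {s : Set E} {f : E →ₗ[𝕜] 𝕜}
    {c : 𝕜} {x : E} (hx : x ∈ convexHull 𝕜 s) (hfx : f x = c) (hle : ∀ a ∈ s, c ≤ f a) :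
    x ∈ convexHull 𝕜 {a | a ∈ s ∧ f a = c} := by
  classical
  obtain ⟨ι, _, w, z, hw₀, hw₁, hz, rfl⟩ := mem_convexHull_iff_exists_fintype.1 hx
  have hslack_nonneg (i : ι) : 0 ≤ w i * (f (z i) - c) :=
    mul_nonneg (hw₀ i) (sub_nonneg.2 (hle _ (hz i)))
  have hslack_sum : ∑ i, w i * (f (z i) - c) = 0 := by
    simp only [mul_sub, Finset.sum_sub_distrib, ← Finset.sum_mul, hw₁, one_mul, ← hfx,
      map_sum, map_smul, smul_eq_mul, sub_self]
  have hsupport (i : ι) (hi : w i ≠ 0) : f (z i) = c := by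
    have := (Finset.sum_eq_zero_iff_of_nonneg fun j _ => hslack_nonneg j).1 hslack_sum i
      (Finset.mem_univ i)
    exact sub_eq_zero.1 ((mul_eq_zero.1 this).resolve_left hi)
  have hw_filter : ∑ i with f (z i) = c, w i = ∑ i, w i :=
    Finset.sum_filter_of_ne fun i _ => hsupport i
  have hx_filter : ∑ i with f (z i) = c, w i • z i = ∑ i, w i • z i :=
    Finset.sum_filter_of_ne fun i _ hi => hsupport i (left_ne_zero_of_smul hi)
  rw [← hx_filter]
  exact (convex_convexHull 𝕜 _).sum_mem (fun i _ => hw₀ i) (hw_filter.trans hw₁)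
    fun i hi => subset_convexHull 𝕜 _ ⟨hz i, (Finset.mem_filter.1 hi).2⟩

section MinNorm

variable {F : Type*} [NormedAddCommGroup F] [InnerProductSpace ℝ F] {K : Set F} {β : F}

theorem Convex.sq_norm_le_inner_of_forall_norm_le (hK : Convex ℝ K) (hβ : β ∈ K)
    (hmin : ∀ y ∈ K, ‖β‖ ≤ ‖y‖) {y : F} (hy : y ∈ K) : ‖β‖ ^ 2 ≤ ⟪y, β⟫ := by
  have : Nonempty K := ⟨⟨β, hβ⟩⟩
  have hinf : ‖(0 : F) - β‖ = ⨅ w : K, ‖(0 : F) - w‖ := by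
    have hbdd : BddBelow (Set.range fun w : K => ‖(0 : F) - w‖) :=
      ⟨0, by rintro _ ⟨w, rfl⟩; positivity⟩
    exact le_antisymm (le_ciInf fun w => by simpa using hmin w w.2) (ciInf_le hbdd ⟨β, hβ⟩)
  have hvar := (norm_eq_iInf_iff_real_inner_le_zero hK hβ).1 hinf y hy
  rw [zero_sub, inner_neg_left, inner_sub_right, real_inner_self_eq_norm_sq,
    real_inner_comm] at hvar
  linarith

theorem Convex.eq_of_forall_norm_le (hK : Convex ℝ K) (hβ : β ∈ K)
    (hβmin : ∀ y ∈ K, ‖β‖ ≤ ‖y‖) {γ : F} (hγ : γ ∈ K) (hγmin : ∀ y ∈ K, ‖γ‖ ≤ ‖y‖) :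
    γ = β := by
  have hβγ := hK.sq_norm_le_inner_of_forall_norm_le hβ hβmin hγ
  have hγβ := hK.sq_norm_le_inner_of_forall_norm_le hγ hγmin hβ
  have : ‖γ - β‖ ^ 2 ≤ 0 := by
    rw [norm_sub_sq_real]
    linarith [real_inner_comm β γ]
  exact sub_eq_zero.1 (norm_eq_zero.1 ((sq_nonpos_iff _).1 this))

end MinNorm

theorem stmt_0_general {E : Type*} [NormedAddCommGroup E] [InnerProductSpace ℝ E]
    (A : Finset E) (β : E)
    (hβ : β ∈ convexHull ℝ (A : Set E))
    (hmin : ∀ y ∈ convexHull ℝ (A : Set E), ‖β‖ ≤ ‖y‖) :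
    (∀ α ∈ A, ‖β‖ ^ 2 ≤ ⟪α, β⟫) ∧
    β ∈ convexHull ℝ {a : E | a ∈ A ∧ ⟪a, β⟫ = ‖β‖ ^ 2} ∧
    (∀ y ∈ convexHull ℝ {a : E | a ∈ A ∧ ⟪a, β⟫ = ‖β‖ ^ 2}, ‖β‖ ≤ ‖y‖) ∧
    (∀ γ : E, γ ∈ convexHull ℝ {a : E | a ∈ A ∧ ⟪a, β⟫ = ‖β‖ ^ 2} →
      (∀ y ∈ convexHull ℝ {a : E | a ∈ A ∧ ⟪a, β⟫ = ‖β‖ ^ 2}, ‖γ‖ ≤ ‖y‖) → γ = β) := by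
  have hK := convex_convexHull ℝ (A : Set E)
  have hle (α : E) (hα : α ∈ A) : ‖β‖ ^ 2 ≤ ⟪α, β⟫ :=
    hK.sq_norm_le_inner_of_forall_norm_le hβ hmin (subset_convexHull ℝ _ hα)
  have hface : β ∈ convexHull ℝ {a : E | a ∈ A ∧ ⟪a, β⟫ = ‖β‖ ^ 2} :=
    mem_convexHull_setOf_eq_of_le (f := (innerₛₗ ℝ).flip β) hβ
      (real_inner_self_eq_norm_sq β) hle
  have hsub : convexHull ℝ {a : E | a ∈ A ∧ ⟪a, β⟫ = ‖β‖ ^ 2} ⊆ convexHull ℝ (A : Set E) :=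
    convexHull_mono fun a ha => ha.1
  have hmin' (y : E) (hy : y ∈ convexHull ℝ {a : E | a ∈ A ∧ ⟪a, β⟫ = ‖β‖ ^ 2}) :
      ‖β‖ ≤ ‖y‖ :=
    hmin y (hsub hy)
  exact ⟨hle, hface, hmin', fun γ hγ hγmin =>
    (convex_convexHull ℝ _).eq_of_forall_norm_le hface hmin' hγ hγmin⟩

/-- Let A be a nonempty finite subset of a finite-dimensional real inner product space E and
let β be the unique point of the convex hull of A closest to the origin. Then ⟨α, β⟩ ≥ ‖β‖²
for every α ∈ A; moreover β lies in the convex hull of A_β = {α ∈ A : ⟨α, β⟩ = ‖β‖²}, and β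
is also the unique point of the convex hull of A_β closest to the origin. -/
theorem stmt_0 {E : Type*} [NormedAddCommGroup E] [InnerProductSpace ℝ E]
    [FiniteDimensional ℝ E] (A : Finset E) (hA : A.Nonempty) (β : E)
    (hβ : β ∈ convexHull ℝ (A : Set E))
    (hmin : ∀ y ∈ convexHull ℝ (A : Set E), ‖β‖ ≤ ‖y‖) :
    (∀ α ∈ A, ‖β‖ ^ 2 ≤ ⟪α, β⟫) ∧
    β ∈ convexHull ℝ {a : E | a ∈ A ∧ ⟪a, β⟫ = ‖β‖ ^ 2} ∧
    (∀ y ∈ convexHull ℝ {a : E | a ∈ A ∧ ⟪a, β⟫ = ‖β‖ ^ 2}, ‖β‖ ≤ ‖y‖) ∧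
    (∀ γ : E, γ ∈ convexHull ℝ {a : E | a ∈ A ∧ ⟪a, β⟫ = ‖β‖ ^ 2} →
      (∀ y ∈ convexHull ℝ {a : E | a ∈ A ∧ ⟪a, β⟫ = ‖β‖ ^ 2}, ‖γ‖ ≤ ‖y‖) → γ = β) :=
  stmt_0_general A β hβ hmin
end

section
/- Let M be a nonempty finite subset of a finite-dimensional real inner product space E and let β ∈ E. Then β is the unique point of the convex hull of M closest to the origin if and only if both of the following hold: ⟨α, β⟩ ≥ ‖β‖² for every α ∈ M, and β lies in the convex hull of {α ∈ M : ⟨α, β⟩ = ‖β‖²}. -/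
open scoped RealInnerProductSpace

/-- Let M be a nonempty finite subset of a finite-dimensional real inner product space E and
let β ∈ E. Then β is the unique point of the convex hull of M closest to the origin if and
only if ⟨α, β⟩ ≥ ‖β‖² for every α ∈ M and β lies in the convex hull of
{α ∈ M : ⟨α, β⟩ = ‖β‖²}. -/
theorem stmt_1 {E : Type*} [NormedAddCommGroup E] [InnerProductSpace ℝ E]
    [FiniteDimensional ℝ E] (M : Finset E) (hM : M.Nonempty) (β : E) :
    (β ∈ convexHull ℝ (M : Set E) ∧ ∀ y ∈ convexHull ℝ (M : Set E), ‖β‖ ≤ ‖y‖) ↔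
    ((∀ α ∈ M, ‖β‖ ^ 2 ≤ ⟪α, β⟫) ∧
      β ∈ convexHull ℝ {a : E | a ∈ M ∧ ⟪a, β⟫ = ‖β‖ ^ 2}) := by
  classical
  have hlin : IsLinearMap ℝ (fun y : E => ⟪y, β⟫) :=
    ⟨fun x y => inner_add_left x y β, fun c x => real_inner_smul_left x β c⟩
  constructor
  · rintro ⟨hβ, hmin⟩
    -- Step 1: for every α ∈ M, ‖β‖² ≤ ⟪α, β⟫.
    have hA : ∀ α ∈ M, ‖β‖ ^ 2 ≤ ⟪α, β⟫ := by
      intro α hα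
      have hαK : α ∈ convexHull ℝ (M : Set E) := subset_convexHull ℝ _ hα
      have key : ∀ t : ℝ, t ∈ Set.Ioc (0:ℝ) 1 →
          0 ≤ 2 * ⟪β, α - β⟫ + t * ‖α - β‖ ^ 2 := by
        intro t ht
        have hmem : β + t • (α - β) ∈ convexHull ℝ (M : Set E) := by
          have := (convex_convexHull ℝ (M : Set E)) hβ hαK (a := 1 - t) (b := t)
            (by linarith [ht.2]) (le_of_lt ht.1) (by ring)
          convert this using 1
          module
        have hle : ‖β‖ ^ 2 ≤ ‖β + t • (α - β)‖ ^ 2 := by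
          have := hmin _ hmem
          nlinarith [norm_nonneg β, norm_nonneg (β + t • (α - β))]
        have hexp : ‖β + t • (α - β)‖ ^ 2
            = ‖β‖ ^ 2 + 2 * t * ⟪β, α - β⟫ + t ^ 2 * ‖α - β‖ ^ 2 := by
          rw [← real_inner_self_eq_norm_sq, ← real_inner_self_eq_norm_sq,
            ← real_inner_self_eq_norm_sq]
          simp only [inner_add_add_self, real_inner_smul_left, real_inner_smul_right]
          rw [real_inner_comm (α - β) β]
          ring
        rw [hexp] at hle
        nlinarith [ht.1]
      have h0 : 0 ≤ 2 * ⟪β, α - β⟫ := by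
        have hT : Filter.Tendsto (fun t : ℝ => 2 * ⟪β, α - β⟫ + t * ‖α - β‖ ^ 2)
            (nhdsWithin 0 (Set.Ioi 0)) (nhds (2 * ⟪β, α - β⟫ + 0 * ‖α - β‖ ^ 2)) := by
          apply Filter.Tendsto.mono_left _ nhdsWithin_le_nhds
          exact (tendsto_const_nhds.add ((Filter.tendsto_id).mul tendsto_const_nhds))
        have h0' : (0:ℝ) ≤ 2 * ⟪β, α - β⟫ + 0 * ‖α - β‖ ^ 2 := by
          refine ge_of_tendsto hT ?_
          filter_upwards [Ioc_mem_nhdsGT_of_mem (Set.left_mem_Ico.2 one_pos)] with t ht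
          exact key t ht
        simpa using h0'
      have : ⟪β, α - β⟫ = ⟪α, β⟫ - ‖β‖ ^ 2 := by
        rw [inner_sub_right, real_inner_self_eq_norm_sq, real_inner_comm]
      linarith [this ▸ h0]
    refine ⟨hA, ?_⟩
    -- Step 2: β lies in the hull of the level set.
    obtain ⟨w, hw0, hw1, hwc⟩ := Finset.mem_convexHull.1 hβ
    have hsum : ∑ α ∈ M, w α * ⟪α, β⟫ = ‖β‖ ^ 2 := by
      have : ⟪M.centerMass w id, β⟫ = ∑ α ∈ M, w α * ⟪α, β⟫ := by
        rw [Finset.centerMass_eq_of_sum_1 _ _ hw1, sum_inner]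
        simp [real_inner_smul_left]
      rw [hwc] at this
      rw [← this, real_inner_self_eq_norm_sq]
    have hzero : ∑ α ∈ M, w α * (⟪α, β⟫ - ‖β‖ ^ 2) = 0 := by
      simp only [mul_sub, Finset.sum_sub_distrib, hsum, ← Finset.sum_mul, hw1]
      ring
    have hterm : ∀ α ∈ M, w α * (⟪α, β⟫ - ‖β‖ ^ 2) = 0 :=
      (Finset.sum_eq_zero_iff_of_nonneg fun α hα =>
        mul_nonneg (hw0 α hα) (by linarith [hA α hα])).1 hzero
    set T := M.filter (fun a => ⟪a, β⟫ = ‖β‖ ^ 2) with hT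
    have hTw : ∀ α ∈ M, α ∉ T → w α = 0 := by
      intro α hα hαT
      have hne : ⟪α, β⟫ ≠ ‖β‖ ^ 2 := by
        intro h; exact hαT (Finset.mem_filter.2 ⟨hα, h⟩)
      rcases mul_eq_zero.1 (hterm α hα) with h | h
      · exact h
      · exact absurd (by linarith) hne
    have hTsum : ∑ α ∈ T, w α = 1 := by
      rw [← hw1]
      exact (Finset.sum_subset (Finset.filter_subset _ _) fun x hx hx' => hTw x hx hx')
    have hTc : T.centerMass w id = β := by
      rw [← hwc]
      exact (Finset.centerMass_subset id (Finset.filter_subset _ _) hTw)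
    have : β ∈ convexHull ℝ (T : Set E) :=
      hTc ▸ T.centerMass_mem_convexHull (fun α hα => hw0 α (Finset.filter_subset _ _ hα))
        (by rw [hTsum]; exact one_pos) (fun α hα => Finset.mem_coe.2 hα)
    convert this using 2
    ext a
    simp [hT]
  · rintro ⟨hA, hβ⟩
    have hsub : {a : E | a ∈ M ∧ ⟪a, β⟫ = ‖β‖ ^ 2} ⊆ (M : Set E) := fun a ha => ha.1
    have hβK : β ∈ convexHull ℝ (M : Set E) := convexHull_mono hsub hβ
    refine ⟨hβK, fun y hy => ?_⟩
    have hy' : ‖β‖ ^ 2 ≤ ⟪y, β⟫ := by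
      have : convexHull ℝ (M : Set E) ⊆ {y : E | ‖β‖ ^ 2 ≤ ⟪y, β⟫} :=
        convexHull_min (fun α hα => hA α hα) (convex_halfSpace_ge hlin _)
      exact this hy
    rcases eq_or_ne β 0 with h0 | h0
    · simp [h0]
    · have hβpos : 0 < ‖β‖ := norm_pos_iff.2 h0
      have := real_inner_le_norm y β
      nlinarith
end

section
/- Let E be a finite-dimensional real inner product space, let β ∈ E, and let M be a nonempty finite subset of the half-space {α ∈ E : ⟨α, β⟩ ≥ ‖β‖²}. If β does NOT lie in the convex hull of {α ∈ M : ⟨α, β⟩ = ‖β‖²}, then the unique point β' of the convex hull of M closest to the origin satisfies ‖β'‖ > ‖β‖. -/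
open scoped RealInnerProductSpace

/-!
Since `M` lies in the half-space `{α | ‖β‖² ≤ ⟪α, β⟫}`, so does `β'`, and then
`‖β' - β‖² ≤ ‖β'‖² - ‖β‖²`; hence `‖β'‖ ≤ ‖β‖` forces `β' = β`. But the hyperplane
`⟪α, β⟫ = ‖β‖²` supports `M`, so a convex combination of `M` lying on it only uses points of
`M` on it, and `β` would lie in the convex hull of those points.
-/

theorem Finset.mem_convexHull_filter_of_apply_le {𝕜 E : Type*} [Field 𝕜] [LinearOrder 𝕜]
    [IsStrictOrderedRing 𝕜] [AddCommGroup E] [Module 𝕜 E] (f : E →ₗ[𝕜] 𝕜) {c : 𝕜}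
    {s : Finset E} (hs : ∀ a ∈ s, c ≤ f a) {x : E} (hx : x ∈ convexHull 𝕜 (s : Set E))
    (hfx : f x ≤ c) : x ∈ convexHull 𝕜 {a | a ∈ s ∧ f a = c} := by
  classical
  obtain ⟨w, hw₀, hw₁, rfl⟩ := Finset.mem_convexHull'.1 hx
  have hexcess : ∑ a ∈ s, w a * (f a - c) = 0 := by
    refine le_antisymm ?_ <|
      Finset.sum_nonneg fun a ha => mul_nonneg (hw₀ a ha) (sub_nonneg.2 (hs a ha))
    simp only [mul_sub, Finset.sum_sub_distrib, ← Finset.sum_mul, hw₁, one_mul]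
    simpa [map_sum, map_smul] using hfx
  have hsupp : ∀ a ∈ s, w a ≠ 0 → f a = c := fun a ha hwa => by
    have := (Finset.sum_eq_zero_iff_of_nonneg fun b hb =>
      mul_nonneg (hw₀ b hb) (sub_nonneg.2 (hs b hb))).1 hexcess a ha
    exact sub_eq_zero.1 ((mul_eq_zero.1 this).resolve_left hwa)
  rw [← Finset.coe_filter]
  refine Finset.mem_convexHull'.2 ⟨w, fun a ha => hw₀ a (Finset.mem_filter.1 ha).1, ?_, ?_⟩
  · rw [Finset.sum_filter_of_ne hsupp, hw₁]
  · exact Finset.sum_filter_of_ne fun a ha hwa =>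
      hsupp a ha fun h => hwa (by rw [h, zero_smul])

theorem eq_of_norm_le_of_norm_sq_le_inner {E : Type*} [NormedAddCommGroup E]
    [InnerProductSpace ℝ E] {x y : E} (hinner : ‖x‖ ^ 2 ≤ ⟪y, x⟫) (hnorm : ‖y‖ ≤ ‖x‖) :
    y = x := by
  have hsq : ‖y‖ ^ 2 ≤ ‖x‖ ^ 2 := pow_le_pow_left₀ (norm_nonneg y) hnorm 2
  have : ‖y - x‖ ^ 2 ≤ 0 := by rw [norm_sub_sq_real]; linarith
  rw [← sub_eq_zero, ← norm_eq_zero]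
  exact pow_eq_zero_iff two_ne_zero |>.1 (le_antisymm this (sq_nonneg _))

theorem stmt_2_general {E : Type*} [NormedAddCommGroup E] [InnerProductSpace ℝ E]
    (β : E) (M : Finset E)
    (hhalf : ∀ α ∈ M, ‖β‖ ^ 2 ≤ ⟪α, β⟫)
    (hnot : β ∉ convexHull ℝ {a : E | a ∈ M ∧ ⟪a, β⟫ = ‖β‖ ^ 2})
    (β' : E) (hβ' : β' ∈ convexHull ℝ (M : Set E)) :
    ‖β‖ < ‖β'‖ := by
  set f : E →ₗ[ℝ] ℝ := (innerₗ E).flip β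
  have hβ'_half : ‖β‖ ^ 2 ≤ ⟪β', β⟫ :=
    convexHull_min hhalf (convex_halfSpace_ge f.isLinear _) hβ'
  by_contra! hle
  obtain rfl := eq_of_norm_le_of_norm_sq_le_inner hβ'_half hle
  exact hnot <| Finset.mem_convexHull_filter_of_apply_le f hhalf hβ'
    (real_inner_self_eq_norm_sq β').le

/-- Let E be a finite-dimensional real inner product space, β ∈ E, and M a nonempty finite
subset of the half-space {α : ⟨α, β⟩ ≥ ‖β‖²}. If β does not lie in the convex hull of
{α ∈ M : ⟨α, β⟩ = ‖β‖²}, then the unique point β' of the convex hull of M closest to the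
origin satisfies ‖β'‖ > ‖β‖. -/
theorem stmt_2 {E : Type*} [NormedAddCommGroup E] [InnerProductSpace ℝ E]
    [FiniteDimensional ℝ E] (β : E) (M : Finset E) (hM : M.Nonempty)
    (hhalf : ∀ α ∈ M, ‖β‖ ^ 2 ≤ ⟪α, β⟫)
    (hnot : β ∉ convexHull ℝ {a : E | a ∈ M ∧ ⟪a, β⟫ = ‖β‖ ^ 2})
    (β' : E) (hβ' : β' ∈ convexHull ℝ (M : Set E))
    (hmin : ∀ y ∈ convexHull ℝ (M : Set E), ‖β'‖ ≤ ‖y‖) :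
    ‖β‖ < ‖β'‖ :=
  stmt_2_general β M hhalf hnot β' hβ'
end

section
/- Fix vectors α_0,…,α_n in a finite-dimensional real inner product space E, and for each nonzero x ∈ ℂ^{n+1} let β(x) denote the unique point of the convex hull of {α_j : x_j ≠ 0} closest to the origin. Then the function x ↦ ‖β(x)‖ is upper semicontinuous on ℂ^{n+1} \ {0}; equivalently, for every real number c the set {x ∈ ℂ^{n+1} \ {0} : ‖β(x)‖ ≥ c} is closed in ℂ^{n+1} \ {0}. -/
/-!
Near a point `x ≠ 0` every coordinate that is nonzero at `x` stays nonzero, so the hull of the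
weights attached to a nearby `y` contains the hull attached to `x`. The point of the larger hull
closest to the origin is at least as close, hence `‖β y‖ ≤ ‖β x‖`: every point of `ℂ^{n+1} \ {0}`
is a local maximum of `‖β‖`, which is stronger than upper semicontinuity.
-/

open Filter Topology Set Function

theorem eventually_support_subset_support {ι M : Type*} [Finite ι] [Zero M] [TopologicalSpace M]
    [T1Space M] (x : ι → M) : ∀ᶠ y in 𝓝 x, support x ⊆ support y := by
  have h : ∀ j, ∀ᶠ y in 𝓝 x, x j ≠ 0 → y j ≠ 0 := fun j =>
    eventually_imp_distrib_left.2 (continuous_apply j).continuousAt.eventually_ne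
  exact (eventually_all.2 h).mono fun y hy j hj => hy j hj

theorem IsLocalMaxOn.upperSemicontinuousWithinAt {α β : Type*} [TopologicalSpace α] [Preorder β]
    {f : α → β} {s : Set α} {a : α} (h : IsLocalMaxOn f s a) : UpperSemicontinuousWithinAt f s a :=
  fun _ hfa => h.mono fun _ hle => hle.trans_lt hfa

theorem isLocalMaxOn_norm_of_closest_to_zero_in_convexHull {ι M E : Type*} [Finite ι] [Zero M]
    [TopologicalSpace M] [T1Space M] [SeminormedAddCommGroup E] [Module ℝ E] (α : ι → E)
    (β : (ι → M) → E)
    (hβ : ∀ x : ι → M, x ≠ 0 →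
      β x ∈ convexHull ℝ (α '' support x) ∧ ∀ y ∈ convexHull ℝ (α '' support x), ‖β x‖ ≤ ‖y‖)
    {x : ι → M} (hx : x ≠ 0) : IsLocalMaxOn (fun x => ‖β x‖) {x | x ≠ 0} x := by
  filter_upwards [nhdsWithin_le_nhds (eventually_support_subset_support x), self_mem_nhdsWithin]
    with y hxy hy
  exact (hβ y hy).2 (β x) (convexHull_mono (image_mono hxy) (hβ x hx).1)

theorem stmt_4_general {E : Type*} [NormedAddCommGroup E] [InnerProductSpace ℝ E]
    (n : ℕ) (α : Fin (n + 1) → E)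
    (β : (Fin (n + 1) → ℂ) → E)
    (hβ : ∀ x : Fin (n + 1) → ℂ, x ≠ 0 →
      β x ∈ convexHull ℝ (α '' {j | x j ≠ 0}) ∧
      ∀ y ∈ convexHull ℝ (α '' {j | x j ≠ 0}), ‖β x‖ ≤ ‖y‖) :
    UpperSemicontinuousOn (fun x => ‖β x‖) {x : Fin (n + 1) → ℂ | x ≠ 0} ∧
    ∀ c : ℝ, IsClosed {x : {y : Fin (n + 1) → ℂ // y ≠ 0} | c ≤ ‖β x.1‖} := by
  have husc : UpperSemicontinuousOn (fun x => ‖β x‖) {x : Fin (n + 1) → ℂ | x ≠ 0} :=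
    fun _ hx =>
      (isLocalMaxOn_norm_of_closest_to_zero_in_convexHull α β hβ hx).upperSemicontinuousWithinAt
  exact ⟨husc, fun c => (upperSemicontinuousOn_iff_restrict.2 husc).isClosed_preimage c⟩

/-- Fix vectors α_0,…,α_n in a finite-dimensional real inner product space E, and for each
nonzero x ∈ ℂ^{n+1} let β(x) be the unique point of the convex hull of {α_j : x_j ≠ 0}
closest to the origin. Then x ↦ ‖β(x)‖ is upper semicontinuous on ℂ^{n+1} \ {0};
equivalently, for every c the set {x ≠ 0 : ‖β(x)‖ ≥ c} is closed in ℂ^{n+1} \ {0}. -/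
theorem stmt_4 {E : Type*} [NormedAddCommGroup E] [InnerProductSpace ℝ E]
    [FiniteDimensional ℝ E] (n : ℕ) (α : Fin (n + 1) → E)
    (β : (Fin (n + 1) → ℂ) → E)
    (hβ : ∀ x : Fin (n + 1) → ℂ, x ≠ 0 →
      β x ∈ convexHull ℝ (α '' {j | x j ≠ 0}) ∧
      ∀ y ∈ convexHull ℝ (α '' {j | x j ≠ 0}), ‖β x‖ ≤ ‖y‖) :
    UpperSemicontinuousOn (fun x => ‖β x‖) {x : Fin (n + 1) → ℂ | x ≠ 0} ∧
    ∀ c : ℝ, IsClosed {x : {y : Fin (n + 1) → ℂ // y ≠ 0} | c ≤ ‖β x.1‖} :=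
  stmt_4_general n α β hβ
end

section
/- Fix vectors α_0,…,α_n in a finite-dimensional real inner product space E, and for each nonzero x ∈ ℂ^{n+1} let β(x) denote the unique point of the convex hull of {α_j : x_j ≠ 0} closest to the origin. For b ∈ E set S_b = {x ∈ ℂ^{n+1} \ {0} : β(x) = b}. Then the closure of S_b in ℂ^{n+1} \ {0} is contained in S_b ∪ {x ∈ ℂ^{n+1} \ {0} : ‖β(x)‖ > ‖b‖}. -/
/-- Fix vectors α_0,…,α_n in a finite-dimensional real inner product space E, and for each
nonzero x ∈ ℂ^{n+1} let β(x) be the unique point of the convex hull of {α_j : x_j ≠ 0}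
closest to the origin. For b ∈ E set S_b = {x ≠ 0 : β(x) = b}. Then the closure of S_b in
ℂ^{n+1} \ {0} is contained in S_b ∪ {x ≠ 0 : ‖β(x)‖ > ‖b‖}. -/
theorem stmt_5 {E : Type*} [NormedAddCommGroup E] [InnerProductSpace ℝ E]
    [FiniteDimensional ℝ E] (n : ℕ) (α : Fin (n + 1) → E)
    (β : (Fin (n + 1) → ℂ) → E)
    (hβ : ∀ x : Fin (n + 1) → ℂ, x ≠ 0 →
      β x ∈ convexHull ℝ (α '' {j | x j ≠ 0}) ∧
      ∀ y ∈ convexHull ℝ (α '' {j | x j ≠ 0}), ‖β x‖ ≤ ‖y‖)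
    (b : E) :
    closure {x : {y : Fin (n + 1) → ℂ // y ≠ 0} | β x.1 = b} ⊆
      {x : {y : Fin (n + 1) → ℂ // y ≠ 0} | β x.1 = b} ∪
      {x : {y : Fin (n + 1) → ℂ // y ≠ 0} | ‖b‖ < ‖β x.1‖} := by
  intro x hx
  -- the open set of points whose support contains the support of x
  have hVopen : IsOpen {y : Fin (n + 1) → ℂ | ∀ j, x.1 j ≠ 0 → y j ≠ 0} := by
    have heq : {y : Fin (n + 1) → ℂ | ∀ j, x.1 j ≠ 0 → y j ≠ 0}
        = ⋂ j ∈ {j | x.1 j ≠ 0}, {y : Fin (n + 1) → ℂ | y j ≠ 0} := by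
      ext y; simp [Set.mem_iInter]
    rw [heq]
    exact (Set.toFinite _).isOpen_biInter fun j _ =>
      isOpen_ne.preimage (continuous_apply j)
  have hUopen : IsOpen {y : {y : Fin (n + 1) → ℂ // y ≠ 0} |
      ∀ j, x.1 j ≠ 0 → y.1 j ≠ 0} :=
    hVopen.preimage continuous_subtype_val
  have hxU : x ∈ {y : {y : Fin (n + 1) → ℂ // y ≠ 0} |
      ∀ j, x.1 j ≠ 0 → y.1 j ≠ 0} := fun j hj => hj
  obtain ⟨y, hyU, hyS⟩ := mem_closure_iff.mp hx _ hUopen hxU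
  -- support inclusion gives hull inclusion
  have hsub : convexHull ℝ (α '' {j | x.1 j ≠ 0}) ⊆
      convexHull ℝ (α '' {j | y.1 j ≠ 0}) :=
    convexHull_mono (Set.image_mono fun j hj => hyU j hj)
  obtain ⟨hbmem, hbmin⟩ := hβ y.1 y.2
  obtain ⟨hxmem, hxmin⟩ := hβ x.1 x.2
  rw [hyS] at hbmem hbmin
  have hbx : β x.1 ∈ convexHull ℝ (α '' {j | y.1 j ≠ 0}) := hsub hxmem
  have hle : ‖b‖ ≤ ‖β x.1‖ := hbmin _ hbx
  rcases eq_or_lt_of_le hle with heq | hlt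
  · left
    -- both b and β x.1 are minimizers in the same convex set; uniqueness
    have hmid : (1/2 : ℝ) • b + (1/2 : ℝ) • β x.1 ∈
        convexHull ℝ (α '' {j | y.1 j ≠ 0}) :=
      (convex_convexHull ℝ _) hbmem hbx (by norm_num) (by norm_num) (by norm_num)
    have h1 : ‖b‖ ≤ ‖(1/2 : ℝ) • b + (1/2 : ℝ) • β x.1‖ := hbmin _ hmid
    have hpar := parallelogram_law_with_norm ℝ b (β x.1)
    have h2 : ‖(1/2 : ℝ) • b + (1/2 : ℝ) • β x.1‖ = (1/2 : ℝ) * ‖b + β x.1‖ := by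
      rw [← smul_add, norm_smul]
      norm_num
    have h3 : ‖b - β x.1‖ = 0 := by
      nlinarith [norm_nonneg (b - β x.1), norm_nonneg (b + β x.1), norm_nonneg b]
    exact (sub_eq_zero.mp (norm_eq_zero.mp h3)).symm
  · right
    exact hlt
end

section
/- Fix vectors α_0,…,α_n in a finite-dimensional real inner product space E, and for each nonzero x ∈ ℂ^{n+1} let β(x) denote the unique point of the convex hull of {α_j : x_j ≠ 0} closest to the origin. For every b ∈ E the set S_b = {x ∈ ℂ^{n+1} \ {0} : β(x) = b} is locally closed in ℂ^{n+1} \ {0}; indeed S_b is an open subset of the closed set {x ∈ ℂ^{n+1} \ {0} : ‖β(x)‖ ≥ ‖b‖}. -/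
/-!
If `β x` is the minimal-norm point of a convex set `K x` that can only grow under small
perturbations of `x` (here: nonzero coordinates stay nonzero), then `‖β‖` can only drop nearby,
so `‖β‖` is upper semicontinuous and `{‖b‖ ≤ ‖β‖}` is closed. On the open set of points near
which `b` stays in `K`, the condition `‖b‖ ≤ ‖β x‖` forces `b` to be a minimal-norm point of
`K x` as well, hence `β x = b` by uniqueness of minimal-norm points in a strictly convex space.
-/

open Filter Function Set Topology

theorem Convex.eq_of_isMinOn_norm {E : Type*} [NormedAddCommGroup E] [NormedSpace ℝ E]
    [StrictConvexSpace ℝ E] {K : Set E} (hK : Convex ℝ K) {u v : E} (hu : u ∈ K) (hv : v ∈ K)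
    (hmu : IsMinOn (‖·‖) K u) (hmv : IsMinOn (‖·‖) K v) : u = v := by
  by_contra hne
  have huv : ‖u‖ = ‖v‖ := le_antisymm (hmu hv) (hmv hu)
  have hmid : (1 / 2 : ℝ) • (u + v) ∈ K := by
    rw [smul_add]
    exact hK hu hv (by norm_num) (by norm_num) (by norm_num)
  exact ((norm_midpoint_lt_iff huv).2 hne).not_ge (hmu hmid)

theorem eventually_support_subset {ι M : Type*} [Finite ι] [TopologicalSpace M] [T1Space M]
    [Zero M] (x₀ : ι → M) : ∀ᶠ x in 𝓝 x₀, support x₀ ⊆ support x := by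
  refine eventually_all.2 fun j => ?_
  by_cases hj : x₀ j = 0
  · exact Eventually.of_forall fun _ h => absurd hj h
  · exact ((continuous_apply j).continuousAt.eventually_ne hj).mono fun _ h _ => h

section MinNormSelection

variable {X E : Type*} [TopologicalSpace X] [NormedAddCommGroup E] {K : X → Set E} {β : X → E}

theorem upperSemicontinuous_norm_of_isMinOn (hmem : ∀ x, β x ∈ K x)
    (hmin : ∀ x, IsMinOn (‖·‖) (K x) (β x)) (hK : ∀ x, ∀ᶠ x' in 𝓝 x, K x ⊆ K x') :
    UpperSemicontinuous fun x => ‖β x‖ := fun x _ hlt =>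
  (hK x).mono fun _ hsub => (hmin _ (hsub (hmem x))).trans_lt hlt

theorem setOf_eq_interior_inter_of_isMinOn [NormedSpace ℝ E] [StrictConvexSpace ℝ E]
    (hconv : ∀ x, Convex ℝ (K x))
    (hmem : ∀ x, β x ∈ K x) (hmin : ∀ x, IsMinOn (‖·‖) (K x) (β x))
    (hK : ∀ x, ∀ᶠ x' in 𝓝 x, K x ⊆ K x') (b : E) :
    {x | β x = b} = interior {x | b ∈ K x} ∩ {x | ‖b‖ ≤ ‖β x‖} := by
  ext x
  constructor
  · rintro rfl
    exact ⟨mem_interior_iff_mem_nhds.2 ((hK x).mono fun _ hsub => hsub (hmem x)), le_refl ‖β x‖⟩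
  · rintro ⟨hbK, hle⟩
    have hbK : b ∈ K x := interior_subset (s := {x | b ∈ K x}) hbK
    have hb : IsMinOn (‖·‖) (K x) b := isMinOn_iff.2 fun _ hy => hle.trans (hmin x hy)
    exact (hconv x).eq_of_isMinOn_norm (hmem x) hbK (hmin x) hb

end MinNormSelection

theorem stmt_6_general {E : Type*} [NormedAddCommGroup E] [InnerProductSpace ℝ E]
    (n : ℕ) (α : Fin (n + 1) → E)
    (β : (Fin (n + 1) → ℂ) → E)
    (hβ : ∀ x : Fin (n + 1) → ℂ, x ≠ 0 →
      β x ∈ convexHull ℝ (α '' {j | x j ≠ 0}) ∧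
      ∀ y ∈ convexHull ℝ (α '' {j | x j ≠ 0}), ‖β x‖ ≤ ‖y‖)
    (b : E) :
    IsLocallyClosed {x : {y : Fin (n + 1) → ℂ // y ≠ 0} | β x.1 = b} ∧
    IsClosed {x : {y : Fin (n + 1) → ℂ // y ≠ 0} | ‖b‖ ≤ ‖β x.1‖} ∧
    ∃ U : Set {y : Fin (n + 1) → ℂ // y ≠ 0}, IsOpen U ∧
      {x : {y : Fin (n + 1) → ℂ // y ≠ 0} | β x.1 = b} =
        U ∩ {x : {y : Fin (n + 1) → ℂ // y ≠ 0} | ‖b‖ ≤ ‖β x.1‖} := by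
  let K : {y : Fin (n + 1) → ℂ // y ≠ 0} → Set E := fun x => convexHull ℝ (α '' support x.1)
  have hmem : ∀ x, β x.1 ∈ K x := fun x => (hβ x.1 x.2).1
  have hmin : ∀ x, IsMinOn (‖·‖) (K x) (β x.1) := fun x => isMinOn_iff.2 (hβ x.1 x.2).2
  have hK : ∀ x, ∀ᶠ x' in 𝓝 x, K x ⊆ K x' := fun x =>
    ((continuous_subtype_val.tendsto x).eventually (eventually_support_subset x.1)).mono
      fun _ hsub => convexHull_mono (image_mono hsub)
  have hclosed := (upperSemicontinuous_norm_of_isMinOn hmem hmin hK).isClosed_preimage ‖b‖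
  have hEq := setOf_eq_interior_inter_of_isMinOn (fun _ => convex_convexHull ℝ _) hmem hmin hK b
  exact ⟨⟨_, _, isOpen_interior, hclosed, hEq⟩, hclosed, _, isOpen_interior, hEq⟩

/-- Fix vectors α_0,…,α_n in a finite-dimensional real inner product space E, and for each
nonzero x ∈ ℂ^{n+1} let β(x) be the unique point of the convex hull of {α_j : x_j ≠ 0}
closest to the origin. For every b ∈ E the set S_b = {x ≠ 0 : β(x) = b} is locally closed
in ℂ^{n+1} \ {0}; indeed S_b is an open subset of the closed set {x ≠ 0 : ‖β(x)‖ ≥ ‖b‖}. -/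
theorem stmt_6 {E : Type*} [NormedAddCommGroup E] [InnerProductSpace ℝ E]
    [FiniteDimensional ℝ E] (n : ℕ) (α : Fin (n + 1) → E)
    (β : (Fin (n + 1) → ℂ) → E)
    (hβ : ∀ x : Fin (n + 1) → ℂ, x ≠ 0 →
      β x ∈ convexHull ℝ (α '' {j | x j ≠ 0}) ∧
      ∀ y ∈ convexHull ℝ (α '' {j | x j ≠ 0}), ‖β x‖ ≤ ‖y‖)
    (b : E) :
    IsLocallyClosed {x : {y : Fin (n + 1) → ℂ // y ≠ 0} | β x.1 = b} ∧
    IsClosed {x : {y : Fin (n + 1) → ℂ // y ≠ 0} | ‖b‖ ≤ ‖β x.1‖} ∧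
    ∃ U : Set {y : Fin (n + 1) → ℂ // y ≠ 0}, IsOpen U ∧
      {x : {y : Fin (n + 1) → ℂ // y ≠ 0} | β x.1 = b} =
        U ∩ {x : {y : Fin (n + 1) → ℂ // y ≠ 0} | ‖b‖ ≤ ‖β x.1‖} :=
  stmt_6_general n α β hβ b
end

section
/- Let m ≥ 1, let d : Fin m → ℝ, and let g be an m×m complex matrix. For t ∈ ℝ let c_t(g) be the m×m matrix with (i,j) entry exp(t(d_j − d_i))·g_{ij}. Then c_t(g) converges (entrywise) as t → +∞ if and only if g_{ij} = 0 whenever d_i < d_j; and in that case the limit is the matrix q_d(g) with (i,j) entry equal to g_{ij} if d_i = d_j and to 0 otherwise. -/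
open Filter Real Topology

section ExpScaling

variable {E : Type*} [NormedAddCommGroup E] [NormedSpace ℝ E]

theorem tendsto_exp_mul_sub_smul (a b : ℝ) (z : E) (h : a < b → z = 0) :
    Tendsto (fun t : ℝ => exp (t * (b - a)) • z) atTop (𝓝 (if a = b then z else 0)) := by
  rcases lt_trichotomy a b with hab | rfl | hba
  · simp [h hab, hab.ne]
  · simp
  · have hexp : Tendsto (fun t : ℝ => exp (t * (b - a))) atTop (𝓝 0) :=
      tendsto_exp_atBot.comp (tendsto_id.atTop_mul_const_of_neg (sub_neg.2 hba))
    simpa [hba.ne'] using hexp.smul_const z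

theorem eq_zero_of_tendsto_exp_mul_sub_smul {a b : ℝ} {z L : E} (hab : a < b)
    (h : Tendsto (fun t : ℝ => exp (t * (b - a)) • z) atTop (𝓝 L)) : z = 0 := by
  by_contra hz
  have hexp : Tendsto (fun t : ℝ => exp (t * (b - a))) atTop atTop :=
    tendsto_exp_atTop.comp (tendsto_id.atTop_mul_const (sub_pos.2 hab))
  have hnorm : Tendsto (fun t : ℝ => ‖exp (t * (b - a)) • z‖) atTop atTop := by
    simpa [norm_smul, abs_of_pos (exp_pos _)] using hexp.atTop_mul_const (norm_pos_iff.2 hz)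
  exact not_tendsto_nhds_of_tendsto_atTop hnorm _ h.norm

end ExpScaling

theorem stmt_8_general (m : ℕ) (d : Fin m → ℝ)
    (g : Matrix (Fin m) (Fin m) ℂ) :
    ((∃ L : Matrix (Fin m) (Fin m) ℂ,
        Filter.Tendsto
          (fun t : ℝ => Matrix.of fun i j : Fin m =>
            Real.exp (t * (d j - d i)) • g i j)
          Filter.atTop (nhds L)) ↔
      ∀ i j : Fin m, d i < d j → g i j = 0) ∧
    ((∀ i j : Fin m, d i < d j → g i j = 0) →
      Filter.Tendsto
        (fun t : ℝ => Matrix.of fun i j : Fin m =>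
          Real.exp (t * (d j - d i)) • g i j)
        Filter.atTop
        (nhds (Matrix.of fun i j : Fin m => if d i = d j then g i j else 0))) := by
  have hlim (h : ∀ i j : Fin m, d i < d j → g i j = 0) :
      Tendsto (fun t : ℝ => Matrix.of fun i j : Fin m => exp (t * (d j - d i)) • g i j) atTop
        (𝓝 (Matrix.of fun i j : Fin m => if d i = d j then g i j else 0)) :=
    tendsto_pi_nhds.2 fun i => tendsto_pi_nhds.2 fun j =>
      tendsto_exp_mul_sub_smul (d i) (d j) (g i j) (h i j)
  refine ⟨⟨?_, fun h => ⟨_, hlim h⟩⟩, hlim⟩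
  rintro ⟨L, hL⟩ i j hij
  exact eq_zero_of_tendsto_exp_mul_sub_smul hij (tendsto_pi_nhds.1 (tendsto_pi_nhds.1 hL i) j)

/-- Let m ≥ 1, d : Fin m → ℝ, and g an m×m complex matrix. For t ∈ ℝ let c_t(g) be the matrix
with (i,j) entry exp(t(d_j − d_i))·g_{ij}. Then c_t(g) converges (entrywise) as t → +∞ if and
only if g_{ij} = 0 whenever d_i < d_j; and in that case the limit is the matrix q_d(g) with
(i,j) entry g_{ij} if d_i = d_j and 0 otherwise. -/
theorem stmt_8 (m : ℕ) (hm : 1 ≤ m) (d : Fin m → ℝ)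
    (g : Matrix (Fin m) (Fin m) ℂ) :
    ((∃ L : Matrix (Fin m) (Fin m) ℂ,
        Filter.Tendsto
          (fun t : ℝ => Matrix.of fun i j : Fin m =>
            Real.exp (t * (d j - d i)) • g i j)
          Filter.atTop (nhds L)) ↔
      ∀ i j : Fin m, d i < d j → g i j = 0) ∧
    ((∀ i j : Fin m, d i < d j → g i j = 0) →
      Filter.Tendsto
        (fun t : ℝ => Matrix.of fun i j : Fin m =>
          Real.exp (t * (d j - d i)) • g i j)
        Filter.atTop
        (nhds (Matrix.of fun i j : Fin m => if d i = d j then g i j else 0))) :=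
  stmt_8_general m d g
end

section
/- Let m ≥ 1, d : Fin m → ℝ and c ∈ ℝ. Let g be an m×m complex matrix with g_{ij} = 0 whenever d_i < d_j, and let x ∈ ℂ^m satisfy x_j = 0 whenever d_j < c. Define p(x) ∈ ℂ^m by p(x)_j = x_j if d_j = c and 0 otherwise, and define q(g) to be the matrix with (i,j) entry g_{ij} if d_i = d_j and 0 otherwise. Then the vector g·x also satisfies (g·x)_i = 0 whenever d_i < c, and p(g·x) = q(g)·p(x). -/
/-- Let m ≥ 1, d : Fin m → ℝ and c ∈ ℝ. Let g be an m×m complex matrix with g_{ij} = 0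
whenever d_i < d_j, and let x ∈ ℂ^m satisfy x_j = 0 whenever d_j < c. Define p(x) by
p(x)_j = x_j if d_j = c and 0 otherwise, and q(g) by entries g_{ij} if d_i = d_j and 0
otherwise. Then g·x satisfies (g·x)_i = 0 whenever d_i < c, and p(g·x) = q(g)·p(x). -/
theorem stmt_10 (m : ℕ) (hm : 1 ≤ m) (d : Fin m → ℝ) (c : ℝ)
    (g : Matrix (Fin m) (Fin m) ℂ) (hg : ∀ i j : Fin m, d i < d j → g i j = 0)
    (x : Fin m → ℂ) (hx : ∀ j : Fin m, d j < c → x j = 0) :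
    (∀ i : Fin m, d i < c → g.mulVec x i = 0) ∧
    (fun j : Fin m => if d j = c then g.mulVec x j else 0) =
      (Matrix.of fun i j : Fin m => if d i = d j then g i j else 0).mulVec
        (fun j : Fin m => if d j = c then x j else 0) := by
  constructor
  · intro i hi
    unfold Matrix.mulVec dotProduct
    apply Finset.sum_eq_zero
    intro k _
    rcases lt_or_ge (d k) c with h | h
    · simp [hx k h]
    · simp [hg i k (lt_of_lt_of_le hi h)]
  · funext j
    simp only [Matrix.mulVec, dotProduct, Matrix.of_apply]
    rcases eq_or_ne (d j) c with hj | hj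
    · rw [if_pos hj]
      apply Finset.sum_congr rfl
      intro k _
      rcases eq_or_ne (d k) c with hk | hk
      · rw [if_pos hk, if_pos (hj.trans hk.symm)]
      · rcases lt_or_gt_of_ne hk with h | h
        · rw [hx k h, if_neg hk, mul_zero, mul_zero]
        · rw [hg j k (hj ▸ h), if_neg hk, zero_mul, mul_zero]
    · rw [if_neg hj]
      symm
      apply Finset.sum_eq_zero
      intro k _
      rcases eq_or_ne (d k) c with hk | hk
      · rw [if_neg (fun h => hj (h.trans hk)), zero_mul]
      · rw [if_neg hk, mul_zero]
end
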